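/- Suppose on the regular d-ary tree with passage times T(x) = Σ_{y ≤ x} f(y) U_y one has P(T(∞) < ∞) = 1. Then almost surely there is a unique infinite line of descent in the infinite cluster A_∞ = {x : T(x) < T(∞)}: a unique sequence (spine_n)_{n≥1} with spine_n ∈ B(n) ∩ A_∞ and spine_n the parent of spine_{n+1} for all n. -/

import Mathlib

/-!
Write `W(x)` for the time to percolate to infinity along paths through `x`. Then `W([]) = T(∞)`,
`W(x)` is the minimum of `W` over the children of `x`, and `T(x) < W(x)` since the weights are
positive. Hence a line of descent in `A_∞` stays on the level set `W = T(∞)`, and repeatedly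
moving to a child that attains the minimum produces such a line. Two distinct lines would branch
at siblings `x₁ ≠ x₂` with `W(x₁) = W(x₂) < ∞`. But `W(x₁) = T(parent) + α^{|x₁|} U_{x₁} + S(x₁)`
where `S(x₁)` involves only the weights strictly below `x₁`, so such a tie forces `U_{x₁}` to equal
a function of the other weights; this has probability zero because `U_{x₁}` is independent of
them and has no atoms.
-/

open MeasureTheory ProbabilityTheory Filter
open scoped ENNReal

noncomputable section

/-- Passage time `T(x) = ∑_{y ≤ x} α^{|y|} U_y` on the `d`-ary tree (vertices are lists over
`Fin d`, ancestors are prefixes). -/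
def pTime (d : ℕ) (α : ℝ) {Ω : Type*} (U : List (Fin d) → Ω → ℝ)
    (x : List (Fin d)) (ω : Ω) : ℝ :=
  ∑ k ∈ Finset.range (x.length + 1), α ^ k * U (x.take k) ω

/-- `T(n) = min { T(x) : |x| = n }`. -/
def genTime (d : ℕ) (α : ℝ) {Ω : Type*} (U : List (Fin d) → Ω → ℝ)
    (n : ℕ) (ω : Ω) : ℝ :=
  ⨅ x : {l : List (Fin d) // l.length = n}, pTime d α U x.1 ω

/-- `T(∞)`, the time to percolate to infinity. -/
def percTime (d : ℕ) (α : ℝ) {Ω : Type*} (U : List (Fin d) → Ω → ℝ)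
    (ω : Ω) : ℝ≥0∞ :=
  ⨆ n, ENNReal.ofReal (genTime d α U n ω)

namespace FirstPassagePercolation

section LinesOfDescent

variable {β : Type*}

/-- `s k` is the vertex of generation `k + 1` of the line; the root `[]` is not part of it. -/
def IsLineOfDescent (A : Set (List β)) (s : ℕ → List β) : Prop :=
  ∀ k, (s k).length = k + 1 ∧ s k ∈ A ∧ s k <+: s (k + 1)

namespace IsLineOfDescent

variable {A B : Set (List β)} {s t : ℕ → List β}

lemma of_forall_mem (hs : IsLineOfDescent A s) (hB : ∀ k, s k ∈ B) : IsLineOfDescent B s :=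
  fun k => ⟨(hs k).1, hB k, (hs k).2.2⟩

lemma exists_zero_eq_singleton (hs : IsLineOfDescent A s) : ∃ c, s 0 = [c] :=
  List.length_eq_one_iff.1 (hs 0).1

lemma exists_succ_eq_append (hs : IsLineOfDescent A s) (k : ℕ) :
    ∃ c, s (k + 1) = s k ++ [c] := by
  obtain ⟨u, hu⟩ := (hs k).2.2
  have hlen : u.length = 1 := by
    have := congrArg List.length hu
    simp only [List.length_append, (hs k).1, (hs (k + 1)).1] at this
    omega
  obtain ⟨c, rfl⟩ := List.length_eq_one_iff.1 hlen
  exact ⟨c, hu.symm⟩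

lemma prefix_of_le (hs : IsLineOfDescent A s) {k n : ℕ} (h : k ≤ n) : s k <+: s n := by
  induction n, h using Nat.le_induction with
  | base => exact List.prefix_refl _
  | succ n _ ih => exact ih.trans (hs n).2.2

lemma eq_of_siblings (hA : ∀ x (c₁ c₂ : β), x ++ [c₁] ∈ A → x ++ [c₂] ∈ A → c₁ = c₂)
    (hs : IsLineOfDescent A s) (ht : IsLineOfDescent A t) : s = t := by
  funext k
  induction k with
  | zero =>
    obtain ⟨c₁, h₁⟩ := hs.exists_zero_eq_singleton
    obtain ⟨c₂, h₂⟩ := ht.exists_zero_eq_singleton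
    have hc₁ : [] ++ [c₁] ∈ A := h₁ ▸ (hs 0).2.1
    have hc₂ : [] ++ [c₂] ∈ A := h₂ ▸ (ht 0).2.1
    rw [h₁, h₂, hA [] c₁ c₂ hc₁ hc₂]
  | succ k ih =>
    obtain ⟨c₁, h₁⟩ := hs.exists_succ_eq_append k
    obtain ⟨c₂, h₂⟩ := ht.exists_succ_eq_append k
    rw [ih] at h₁
    have hc₁ : t k ++ [c₁] ∈ A := h₁ ▸ (hs (k + 1)).2.1
    have hc₂ : t k ++ [c₂] ∈ A := h₂ ▸ (ht (k + 1)).2.1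
    rw [h₁, h₂, hA (t k) c₁ c₂ hc₁ hc₂]

end IsLineOfDescent

lemma exists_isLineOfDescent {A : Set (List β)} (hroot : [] ∈ A)
    (hstep : ∀ x ∈ A, ∃ c, x ++ [c] ∈ A) : ∃ s, IsLineOfDescent A s := by
  obtain ⟨c₀, -⟩ := hstep [] hroot
  have : Nonempty β := ⟨c₀⟩
  choose! next hnext using hstep
  set grow : List β → List β := fun x => x ++ [next x]
  have hgrow : ∀ k, grow^[k + 1] [] = grow^[k] [] ++ [next (grow^[k] [])] := fun k =>
    Function.iterate_succ_apply' grow k []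
  have hmem : ∀ k, grow^[k] [] ∈ A := by
    intro k
    induction k with
    | zero => exact hroot
    | succ k ih => rw [hgrow]; exact hnext _ ih
  have hlen : ∀ k, (grow^[k] []).length = k := by
    intro k
    induction k with
    | zero => rfl
    | succ k ih => rw [hgrow, List.length_append, ih, List.length_singleton]
  refine ⟨fun k => grow^[k + 1] [], fun k => ⟨hlen _, hmem _, ?_⟩⟩
  show grow^[k + 1] [] <+: grow^[k + 1 + 1] []
  rw [hgrow (k + 1)]
  exact List.prefix_append _ _

end LinesOfDescent

instance instFiniteSubtypeLengthEq (d m : ℕ) : Finite {l : List (Fin d) // l.length = m} :=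
  inferInstanceAs (Finite (List.Vector (Fin d) m))

instance instNonemptySubtypeLengthEq (d m : ℕ) [NeZero d] :
    Nonempty {l : List (Fin d) // l.length = m} :=
  ⟨⟨List.replicate m 0, List.length_replicate⟩⟩

def descTime (d : ℕ) (α : ℝ) {Ω : Type*} (U : List (Fin d) → Ω → ℝ)
    (x : List (Fin d)) (m : ℕ) (ω : Ω) : ℝ≥0∞ :=
  ⨅ t : {l : List (Fin d) // l.length = m}, ENNReal.ofReal (pTime d α U (x ++ t.1) ω)

def percTimeThrough (d : ℕ) (α : ℝ) {Ω : Type*} (U : List (Fin d) → Ω → ℝ)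
    (x : List (Fin d)) (ω : Ω) : ℝ≥0∞ :=
  ⨆ m, descTime d α U x m ω

def pathTimeBelow (d : ℕ) (α : ℝ) {Ω : Type*} (U : List (Fin d) → Ω → ℝ)
    (x t : List (Fin d)) (ω : Ω) : ℝ :=
  ∑ k ∈ Finset.range t.length, α ^ (x.length + 1 + k) * U (x ++ t.take (k + 1)) ω

/-- The part of `percTimeThrough x` that involves only the weights strictly below `x`. -/
def percTimeBelow (d : ℕ) (α : ℝ) {Ω : Type*} (U : List (Fin d) → Ω → ℝ)
    (x : List (Fin d)) (ω : Ω) : ℝ≥0∞ :=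
  ⨆ m, ⨅ t : {l : List (Fin d) // l.length = m}, ENNReal.ofReal (pathTimeBelow d α U x t.1 ω)

section Deterministic

variable {Ω : Type*} {d : ℕ} {α : ℝ} {U : List (Fin d) → Ω → ℝ} {ω : Ω}

lemma pTime_append (x t : List (Fin d)) (ω : Ω) :
    pTime d α U (x ++ t) ω = pTime d α U x ω + pathTimeBelow d α U x t ω := by
  unfold pTime pathTimeBelow
  rw [List.length_append, show x.length + t.length + 1 = x.length + 1 + t.length by omega,
    Finset.sum_range_add]
  congr 1
  · refine Finset.sum_congr rfl fun k hk => ?_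
    rw [List.take_append, Nat.sub_eq_zero_of_le (Nat.lt_succ_iff.mp (Finset.mem_range.mp hk)),
      List.take_zero, List.append_nil]
  · refine Finset.sum_congr rfl fun k _ => ?_
    rw [List.take_append, List.take_of_length_le (by omega),
      show x.length + 1 + k - x.length = k + 1 by omega]

lemma pTime_append_singleton (x : List (Fin d)) (c : Fin d) (ω : Ω) :
    pTime d α U (x ++ [c]) ω = pTime d α U x ω + α ^ (x.length + 1) * U (x ++ [c]) ω := by
  simp [pTime_append, pathTimeBelow]

lemma pTime_nonneg (hα : 0 ≤ α) (hU : ∀ y, 0 ≤ U y ω) (x : List (Fin d)) :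
    0 ≤ pTime d α U x ω :=
  Finset.sum_nonneg fun _ _ => mul_nonneg (pow_nonneg hα _) (hU _)

lemma pathTimeBelow_nonneg (hα : 0 ≤ α) (hU : ∀ y, 0 ≤ U y ω) (x t : List (Fin d)) :
    0 ≤ pathTimeBelow d α U x t ω :=
  Finset.sum_nonneg fun _ _ => mul_nonneg (pow_nonneg hα _) (hU _)

lemma pTime_le_pTime_append (hα : 0 ≤ α) (hU : ∀ y, 0 ≤ U y ω) (x t : List (Fin d)) :
    pTime d α U x ω ≤ pTime d α U (x ++ t) ω := by
  rw [pTime_append]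
  exact le_add_of_nonneg_right (pathTimeBelow_nonneg hα hU x t)

lemma descTime_le (x : List (Fin d)) {m : ℕ} {t : List (Fin d)} (ht : t.length = m) :
    descTime d α U x m ω ≤ ENNReal.ofReal (pTime d α U (x ++ t) ω) :=
  iInf_le (fun t : {l : List (Fin d) // l.length = m} =>
    ENNReal.ofReal (pTime d α U (x ++ t.1) ω)) ⟨t, ht⟩

lemma descTime_zero (x : List (Fin d)) :
    descTime d α U x 0 ω = ENNReal.ofReal (pTime d α U x ω) := by
  refine le_antisymm ((descTime_le x (t := []) rfl).trans_eq (by rw [List.append_nil]))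
    (le_iInf fun t => ?_)
  rw [List.length_eq_zero_iff.mp t.2, List.append_nil]

lemma descTime_succ (x : List (Fin d)) (m : ℕ) :
    descTime d α U x (m + 1) ω = ⨅ c : Fin d, descTime d α U (x ++ [c]) m ω := by
  refine le_antisymm (le_iInf₂ fun c t => ?_) (le_iInf fun ⟨t, ht⟩ => ?_)
  · rw [List.append_assoc, List.singleton_append]
    exact descTime_le x (by rw [List.length_cons, t.2])
  · obtain ⟨c, r, rfl⟩ := List.exists_cons_of_length_eq_add_one ht
    calc ⨅ c, descTime d α U (x ++ [c]) m ω ≤ descTime d α U (x ++ [c]) m ω := iInf_le _ c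
      _ ≤ ENNReal.ofReal (pTime d α U (x ++ [c] ++ r) ω) :=
        descTime_le _ (Nat.succ_inj.mp ht)
      _ = ENNReal.ofReal (pTime d α U (x ++ c :: r) ω) := by
        rw [List.append_assoc, List.singleton_append]

lemma monotone_descTime (hα : 0 ≤ α) (hU : ∀ y, 0 ≤ U y ω) (x : List (Fin d)) :
    Monotone (descTime d α U x · ω) := by
  refine monotone_nat_of_le_succ fun m => le_iInf fun t => ?_
  calc descTime d α U x m ω ≤ ENNReal.ofReal (pTime d α U (x ++ t.1.take m) ω) :=
        descTime_le x (by simp [t.2])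
    _ ≤ ENNReal.ofReal (pTime d α U (x ++ t.1) ω) := by
        refine ENNReal.ofReal_le_ofReal ?_
        conv_rhs => rw [← List.take_append_drop m t.1, ← List.append_assoc]
        exact pTime_le_pTime_append hα hU _ _

lemma descTime_le_percTimeThrough (x : List (Fin d)) (m : ℕ) :
    descTime d α U x m ω ≤ percTimeThrough d α U x ω :=
  le_iSup (descTime d α U x · ω) m

lemma percTimeThrough_nil [NeZero d] :
    percTimeThrough d α U [] ω = percTime d α U ω := by
  simp [percTimeThrough, percTime, descTime, genTime]

lemma percTimeThrough_mono (hα : 0 ≤ α) (hU : ∀ y, 0 ≤ U y ω) {x y : List (Fin d)}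
    (h : x <+: y) : percTimeThrough d α U x ω ≤ percTimeThrough d α U y ω := by
  obtain ⟨u, rfl⟩ := h
  refine iSup_le fun m => ?_
  calc descTime d α U x m ω ≤ descTime d α U x (u.length + m) ω :=
        monotone_descTime hα hU x (Nat.le_add_left m _)
    _ ≤ descTime d α U (x ++ u) m ω := le_iInf fun t => by
        rw [List.append_assoc]
        exact descTime_le x (by rw [List.length_append, t.2])
    _ ≤ percTimeThrough d α U (x ++ u) ω := descTime_le_percTimeThrough _ m

lemma percTimeThrough_eq_iInf_append [NeZero d] (hα : 0 ≤ α) (hU : ∀ y, 0 ≤ U y ω)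
    (x : List (Fin d)) :
    percTimeThrough d α U x ω = ⨅ c : Fin d, percTimeThrough d α U (x ++ [c]) ω := by
  refine le_antisymm (le_iInf fun c => percTimeThrough_mono hα hU (List.prefix_append x [c])) ?_
  simp only [percTimeThrough]
  rw [← iSup_iInf_of_monotone fun c => monotone_descTime hα hU (x ++ [c])]
  exact iSup_le fun m => (descTime_succ x m).symm.trans_le (descTime_le_percTimeThrough x _)

lemma exists_percTimeThrough_append_eq [NeZero d] (hα : 0 ≤ α) (hU : ∀ y, 0 ≤ U y ω)
    (x : List (Fin d)) : ∃ c, percTimeThrough d α U (x ++ [c]) ω = percTimeThrough d α U x ω := by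
  obtain ⟨c, hc⟩ := exists_eq_ciInf_of_finite (f := fun c => percTimeThrough d α U (x ++ [c]) ω)
  exact ⟨c, hc.trans (percTimeThrough_eq_iInf_append hα hU x).symm⟩

lemma ofReal_pTime_lt_percTimeThrough [NeZero d] (hα : 0 < α) (hU : ∀ y, 0 < U y ω)
    (x : List (Fin d)) : ENNReal.ofReal (pTime d α U x ω) < percTimeThrough d α U x ω := by
  obtain ⟨c, hc⟩ := exists_eq_ciInf_of_finite (f := fun c => descTime d α U (x ++ [c]) 0 ω)
  have hlt : pTime d α U x ω < pTime d α U (x ++ [c]) ω := by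
    rw [pTime_append_singleton]
    exact lt_add_of_pos_right _ (mul_pos (pow_pos hα _) (hU _))
  calc ENNReal.ofReal (pTime d α U x ω) < ENNReal.ofReal (pTime d α U (x ++ [c]) ω) :=
        (ENNReal.ofReal_lt_ofReal_iff_of_nonneg (pTime_nonneg hα.le (fun y => (hU y).le) x)).2 hlt
    _ = descTime d α U x 1 ω := by rw [descTime_succ, ← hc, descTime_zero]
    _ ≤ percTimeThrough d α U x ω := descTime_le_percTimeThrough x 1

lemma percTimeThrough_eq_of_isLineOfDescent [NeZero d] (hα : 0 ≤ α) (hU : ∀ y, 0 ≤ U y ω)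
    {s : ℕ → List (Fin d)}
    (hs : IsLineOfDescent {x | ENNReal.ofReal (pTime d α U x ω) < percTime d α U ω} s) (k : ℕ) :
    percTimeThrough d α U (s k) ω = percTime d α U ω := by
  refine le_antisymm (iSup_le fun m => ?_) ?_
  · obtain ⟨u, hu⟩ := hs.prefix_of_le (Nat.le_add_right k m)
    have hlen : u.length = m := by
      have := congrArg List.length hu
      simp only [List.length_append, (hs k).1, (hs (k + m)).1] at this
      omega
    calc descTime d α U (s k) m ω ≤ ENNReal.ofReal (pTime d α U (s k ++ u) ω) :=
          descTime_le _ hlen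
      _ ≤ percTime d α U ω := by rw [hu]; exact (hs (k + m)).2.1.le
  · rw [← percTimeThrough_nil]
    exact percTimeThrough_mono hα hU List.nil_prefix

lemma percTimeThrough_eq_ofReal_pTime_add [NeZero d] (hα : 0 ≤ α) (hU : ∀ y, 0 ≤ U y ω)
    (x : List (Fin d)) :
    percTimeThrough d α U x ω = ENNReal.ofReal (pTime d α U x ω) + percTimeBelow d α U x ω := by
  simp only [percTimeThrough, percTimeBelow, descTime, ENNReal.add_iSup, ENNReal.add_iInf]
  refine iSup_congr fun m => iInf_congr fun t => ?_
  rw [pTime_append, ENNReal.ofReal_add (pTime_nonneg hα hU x) (pathTimeBelow_nonneg hα hU x t.1)]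

lemma weight_eq_of_percTimeThrough_eq [NeZero d] (hα : 0 < α) (hU : ∀ y, 0 ≤ U y ω)
    {z : List (Fin d)} {c : Fin d} {v : ℝ≥0∞} (h : percTimeThrough d α U (z ++ [c]) ω = v)
    (hv : v ≠ ⊤) :
    U (z ++ [c]) ω =
      (v.toReal - pTime d α U z ω - (percTimeBelow d α U (z ++ [c]) ω).toReal) /
        α ^ (z.length + 1) := by
  rw [percTimeThrough_eq_ofReal_pTime_add hα.le hU] at h
  have hbelow : percTimeBelow d α U (z ++ [c]) ω ≠ ⊤ := fun htop => hv (by simp [← h, htop])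
  rw [← h, ENNReal.toReal_add ENNReal.ofReal_ne_top hbelow,
    ENNReal.toReal_ofReal (pTime_nonneg hα.le hU _), pTime_append_singleton]
  field_simp
  ring

theorem existsUnique_isLineOfDescent [NeZero d] (hα : 0 < α) (hU : ∀ y, 0 < U y ω)
    (hfin : percTime d α U ω < ⊤)
    (hties : ∀ z (c₁ c₂ : Fin d), c₁ ≠ c₂ →
      percTimeThrough d α U (z ++ [c₁]) ω = percTimeThrough d α U (z ++ [c₂]) ω →
      percTimeThrough d α U (z ++ [c₁]) ω = ⊤) :
    ∃! s, IsLineOfDescent {x | ENNReal.ofReal (pTime d α U x ω) < percTime d α U ω} s := by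
  have hU₀ : ∀ y, 0 ≤ U y ω := fun y => (hU y).le
  set G := {x | percTimeThrough d α U x ω = percTime d α U ω}
  have hsib : ∀ x (c₁ c₂ : Fin d), x ++ [c₁] ∈ G → x ++ [c₂] ∈ G → c₁ = c₂ := by
    intro x c₁ c₂ h₁ h₂
    by_contra hc
    exact hfin.ne (h₁ ▸ hties x c₁ c₂ hc (h₁.trans h₂.symm))
  obtain ⟨s, hs⟩ := exists_isLineOfDescent (A := G) percTimeThrough_nil fun x hx =>
    (exists_percTimeThrough_append_eq hα.le hU₀ x).imp fun _ hc => hc.trans hx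
  refine ⟨s, hs.of_forall_mem fun k => ?_, fun t ht => ?_⟩
  · exact (ofReal_pTime_lt_percTimeThrough hα hU (s k)).trans_eq (hs k).2.1
  · exact (ht.of_forall_mem (percTimeThrough_eq_of_isLineOfDescent hα.le hU₀ ht)).eq_of_siblings
      hsib hs

end Deterministic

section Probability

instance instNullSingletonClassGammaMeasure (a r : ℝ) : NullSingletonClass (gammaMeasure a r) :=
  inferInstanceAs (NullSingletonClass (volume.withDensity (gammaPDF a r)))

instance instNullSingletonClassExpMeasure (r : ℝ) : NullSingletonClass (expMeasure r) :=
  instNullSingletonClassGammaMeasure 1 r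

lemma gammaMeasure_Iic_zero (a r : ℝ) : gammaMeasure a r (Set.Iic 0) = 0 := by
  rw [← measure_congr Iio_ae_eq_Iic, gammaMeasure, withDensity_apply _ measurableSet_Iio]
  exact lintegral_gammaPDF_of_nonpos le_rfl

variable {Ω : Type*} [MeasurableSpace Ω] {μ : Measure Ω}

lemma ae_forall_pos_of_map_eq_expMeasure {ι : Type*} [Countable ι] {X : ι → Ω → ℝ} {r : ℝ}
    (hX : ∀ i, Measurable (X i)) (hexp : ∀ i, μ.map (X i) = expMeasure r) :
    ∀ᵐ ω ∂μ, ∀ i, 0 < X i ω := by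
  refine ae_all_iff.2 fun i => ?_
  rw [ae_iff]
  simp only [not_lt]
  rw [show {ω | X i ω ≤ 0} = X i ⁻¹' Set.Iic 0 from rfl,
    ← Measure.map_apply (hX i) measurableSet_Iic, hexp i]
  exact gammaMeasure_Iic_zero 1 r

/-- The diagonal is null for the product of a law with an atomless one. -/
lemma measure_eq_eq_zero_of_indepFun [IsFiniteMeasure μ] {X g : Ω → ℝ} (hg : Measurable g)
    (hX : Measurable X) (hgX : IndepFun g X μ) [NullSingletonClass (μ.map X)] :
    μ {ω | g ω = X ω} = 0 := by
  have hdiag : MeasurableSet {p : ℝ × ℝ | p.1 = p.2} :=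
    (isClosed_eq continuous_fst continuous_snd).measurableSet
  have hslice : ∀ a : ℝ, Prod.mk a ⁻¹' {p : ℝ × ℝ | p.1 = p.2} = {a} := fun a => by
    ext b; simp [eq_comm]
  rw [show {ω | g ω = X ω} = (fun ω => (g ω, X ω)) ⁻¹' {p | p.1 = p.2} from rfl,
    ← Measure.map_apply (hg.prodMk hX) hdiag,
    (indepFun_iff_map_prod_eq_prod_map_map hg.aemeasurable hX.aemeasurable).1 hgX,
    Measure.prod_apply hdiag]
  simp [hslice]

/-- `hg` says that `g` is a function of the `X j` with `j ≠ i` only. -/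
lemma measure_eq_eq_zero_of_iIndepFun [IsFiniteMeasure μ] {ι : Type*} {X : ι → Ω → ℝ}
    (hX : ∀ i, Measurable (X i)) (h : iIndepFun X μ) (i : ι) [NullSingletonClass (μ.map (X i))]
    {g : Ω → ℝ} (hg : ∀ m : MeasurableSpace Ω, (∀ j ≠ i, Measurable[m] (X j)) → Measurable[m] g) :
    μ {ω | g ω = X i ω} = 0 := by
  have hind := indep_iSup_of_disjoint (fun j => (hX j).comap_le) h.iIndep
    (disjoint_compl_left (a := ({i} : Set ι)))
  simp only [Set.mem_singleton_iff, iSup_iSup_eq_left] at hind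
  have hgX : IndepFun g (X i) μ := by
    rw [IndepFun_iff_Indep]
    refine indep_of_indep_of_le_left hind (hg _ fun j hj => ?_).comap_le
    exact Measurable.of_comap_le (le_iSup₂
      (f := fun j (_ : j ∈ ({i}ᶜ : Set ι)) => MeasurableSpace.comap (X j) inferInstance) j hj)
  exact measure_eq_eq_zero_of_indepFun (hg _ fun j _ => hX j) (hX i) hgX

end Probability

section Measurability

variable {Ω : Type*} {d : ℕ} {α : ℝ} {U : List (Fin d) → Ω → ℝ}

lemma measurable_pTime {m : MeasurableSpace Ω} {x : List (Fin d)}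
    (hU : ∀ y, y <+: x → Measurable[m] (U y)) : Measurable[m] (pTime d α U x) :=
  Finset.measurable_sum _ fun k _ => (hU _ (List.take_prefix k x)).const_mul _

lemma measurable_percTimeThrough {m : MeasurableSpace Ω} {x : List (Fin d)}
    (hU : ∀ y, y <+: x ∨ x <+: y → Measurable[m] (U y)) :
    Measurable[m] (percTimeThrough d α U x) :=
  .iSup fun _ => .iInf fun t => ENNReal.measurable_ofReal.comp <| measurable_pTime fun y hy =>
    hU y (List.prefix_or_prefix_of_prefix hy (List.prefix_append x t.1))

lemma measurable_percTimeBelow {m : MeasurableSpace Ω} {x : List (Fin d)}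
    (hU : ∀ u ≠ [], Measurable[m] (U (x ++ u))) : Measurable[m] (percTimeBelow d α U x) :=
  .iSup fun _ => .iInf fun t => ENNReal.measurable_ofReal.comp <|
    Finset.measurable_sum _ fun k hk => (hU _ (by
      rw [Ne, List.take_eq_nil_iff]
      rintro (h | h)
      · omega
      · simp [h] at hk)).const_mul _

end Measurability

section Ties

variable {Ω : Type*} [MeasurableSpace Ω] {μ : Measure Ω} {d : ℕ} {α : ℝ}
  {U : List (Fin d) → Ω → ℝ}

/-- A tie between siblings pins the weight of one of them to a function of all the others. -/
lemma ae_percTimeThrough_eq_top_of_sibling_eq [IsFiniteMeasure μ] [NeZero d] (hα : 0 < α)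
    (hmeas : ∀ x, Measurable (U x)) (hInd : iIndepFun U μ)
    (hExp : ∀ x, μ.map (U x) = expMeasure 1) (z : List (Fin d)) {c₁ c₂ : Fin d} (hc : c₁ ≠ c₂) :
    ∀ᵐ ω ∂μ, percTimeThrough d α U (z ++ [c₁]) ω = percTimeThrough d α U (z ++ [c₂]) ω →
      percTimeThrough d α U (z ++ [c₁]) ω = ⊤ := by
  set x₁ := z ++ [c₁]
  set g : Ω → ℝ := fun ω => ((percTimeThrough d α U (z ++ [c₂]) ω).toReal - pTime d α U z ω -
    (percTimeBelow d α U x₁ ω).toReal) / α ^ (z.length + 1)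
  have hg : ∀ m : MeasurableSpace Ω, (∀ y ≠ x₁, Measurable[m] (U y)) → Measurable[m] g := by
    intro m hU
    have hz : ∀ y, y <+: z → Measurable[m] (U y) := fun y hy => hU y fun h => by
      have := hy.length_le
      simp [h, x₁] at this
    have hx₂ : ∀ y, y <+: z ++ [c₂] ∨ z ++ [c₂] <+: y → Measurable[m] (U y) := by
      refine fun y hy => hU y fun h => hc ?_
      have hlen : x₁.length = (z ++ [c₂]).length := by simp [x₁]
      rw [h] at hy
      simpa [x₁] using hy.elim (·.eq_of_length hlen) (·.eq_of_length hlen.symm |>.symm)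
    have hbelow : ∀ u ≠ [], Measurable[m] (U (x₁ ++ u)) := fun u hu => hU _ (by simpa using hu)
    exact ((((measurable_percTimeThrough hx₂).ennreal_toReal).sub (measurable_pTime hz)).sub
      (measurable_percTimeBelow hbelow).ennreal_toReal).div_const _
  have : NullSingletonClass (μ.map (U x₁)) := by rw [hExp]; infer_instance
  have hnull : ∀ᵐ ω ∂μ, g ω ≠ U x₁ ω :=
    measure_eq_zero_iff_ae_notMem.1 (measure_eq_eq_zero_of_iIndepFun hmeas hInd x₁ hg)
  filter_upwards [hnull, ae_forall_pos_of_map_eq_expMeasure hmeas hExp] with ω hne hpos heq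
  by_contra htop
  exact hne (weight_eq_of_percTimeThrough_eq hα (fun y => (hpos y).le) heq (heq ▸ htop)).symm

lemma ae_forall_percTimeThrough_eq_top_of_sibling_eq [IsFiniteMeasure μ] [NeZero d]
    (hα : 0 < α) (hmeas : ∀ x, Measurable (U x)) (hInd : iIndepFun U μ)
    (hExp : ∀ x, μ.map (U x) = expMeasure 1) :
    ∀ᵐ ω ∂μ, ∀ z (c₁ c₂ : Fin d), c₁ ≠ c₂ →
      percTimeThrough d α U (z ++ [c₁]) ω = percTimeThrough d α U (z ++ [c₂]) ω →
      percTimeThrough d α U (z ++ [c₁]) ω = ⊤ := by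
  refine ae_all_iff.2 fun z => ae_all_iff.2 fun c₁ => ae_all_iff.2 fun c₂ => ?_
  by_cases hc : c₁ = c₂
  · exact .of_forall fun _ h => absurd hc h
  · filter_upwards [ae_percTimeThrough_eq_top_of_sibling_eq hα hmeas hInd hExp z hc] with ω h _
    exact h

end Ties

end FirstPassagePercolation

open FirstPassagePercolation in
/-- if `P(T(∞) < ∞) = 1`, then almost surely there is a unique infinite line of
descent in the infinite cluster `A_∞ = {x : T(x) < T(∞)}`: a unique sequence `(spine_n)_{n ≥ 1}`
with `spine_n` of generation `n`, `spine_n ∈ A_∞`, and `spine_n` the parent of `spine_{n+1}`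
(here `s k` stands for `spine_{k+1}`). -/
theorem unique_infinite_line_of_descent
    {Ω : Type*} [MeasurableSpace Ω] (μ : Measure Ω) [IsProbabilityMeasure μ]
    (d : ℕ) (hd : 2 ≤ d) (α : ℝ) (hα : α ∈ Set.Ioo (0 : ℝ) 1)
    (U : List (Fin d) → Ω → ℝ) (hmeas : ∀ x, Measurable (U x))
    (hInd : iIndepFun U μ)
    (hExp : ∀ x, Measure.map (U x) μ = expMeasure 1)
    (hfin : ∀ᵐ ω ∂μ, percTime d α U ω < ⊤) :
    ∀ᵐ ω ∂μ, ∃! s : ℕ → List (Fin d), ∀ k : ℕ,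
      (s k).length = k + 1 ∧
      ENNReal.ofReal (pTime d α U (s k) ω) < percTime d α U ω ∧
      s k <+: s (k + 1) := by
  have : NeZero d := ⟨by omega⟩
  filter_upwards [hfin, ae_forall_pos_of_map_eq_expMeasure hmeas hExp,
    ae_forall_percTimeThrough_eq_top_of_sibling_eq hα.1 hmeas hInd hExp] with ω hω hpos hties
  exact existsUnique_isLineOfDescent hα.1 hpos hω hties
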